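/- arXiv:1711.00113 — 2 statements merged into one kernel-verified Lean document; each statement's English description precedes it below -/
import Mathlib

section
/- In the call-by-value λ-calculus, the up-to-reduction function red strongly evolves to red ∪ id, red ∪ id; that is, whenever R ⤳ S,T, then red(R) ⤳ (red ∪ id)(S), (red ∪ id)(T). -/
namespace NF

/-! ### Functions on binary relations -/

/-- Binary relations over `α`, as sets of pairs. -/
abbrev Rel (α : Type) := Set (α × α)

/-- Functions on relations. -/
abbrev RelF (α : Type) := Rel α → Rel α

/-- The identity function on relations. -/
def idF {α : Type} : RelF α := fun R => R

/-- Pointwise union of functions on relations. -/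
def unionF {α : Type} (f g : RelF α) : RelF α := fun R => f R ∪ g R

/-- Pointwise composition of functions on relations. -/
def compF {α : Type} (f g : RelF α) : RelF α := fun R => f (g R)

/-- `f̂ = f ∪ id`. -/
def hatF {α : Type} (f : RelF α) : RelF α := unionF f idF

/-- Iterates `fⁿ`. -/
def iterF {α : Type} (f : RelF α) : ℕ → RelF α
  | 0 => idF
  | n + 1 => compF f (iterF f n)

/-- `f^ω(R) = ⋃ₙ fⁿ(R)`. -/
def omegaF {α : Type} (f : RelF α) : RelF α := fun R => ⋃ n, iterF f n R

/-- `f` is continuous if `f(R) ⊆ ⋃ { f(S) | S ⊆ R, S finite }` for every `R`. -/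
def ContinuousF {α : Type} (f : RelF α) : Prop :=
  ∀ R, f R ⊆ ⋃₀ { T | ∃ S, S ⊆ R ∧ S.Finite ∧ T = f S }

/-- `f` is monotone if `R ⊆ S` implies `f(R) ⊆ f(S)`. -/
def MonotoneF {α : Type} (f : RelF α) : Prop := ∀ ⦃R S : Rel α⦄, R ⊆ S → f R ⊆ f S

/-- A set of functions on relations, seen as the function `⋃_{f ∈ F} f`. -/
def setF {α : Type} (F : Set (RelF α)) : RelF α := fun R => ⋃ f ∈ F, f R

/-- Functions generated from a set `F`: built from members of `F` and `id`
using union, composition and `·^ω`. -/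
inductive Generated {α : Type} (F : Set (RelF α)) : RelF α → Prop
  | mem {f} : f ∈ F → Generated F f
  | id : Generated F idF
  | union {f g} : Generated F f → Generated F g → Generated F (unionF f g)
  | comp {f g} : Generated F f → Generated F g → Generated F (compF f g)
  | omega {f} : Generated F f → Generated F (omegaF f)

/-! ### Call-by-value λ-calculus -/

/-- Terms of the call-by-value λ-calculus, with variables named by natural numbers. -/
inductive Tm : Type
  | var : ℕ → Tm
  | lam : ℕ → Tm → Tm
  | app : Tm → Tm → Tm

/-- Values are variables and λ-abstractions. -/
def IsValue : Tm → Prop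
  | .var _ => True
  | .lam _ _ => True
  | .app _ _ => False

/-- Free variables. -/
def fv : Tm → Finset ℕ
  | .var x => {x}
  | .lam x t => fv t \ {x}
  | .app t s => fv t ∪ fv s

/-- Size of a term. -/
def size : Tm → ℕ
  | .var _ => 1
  | .lam _ t => size t + 1
  | .app t s => size t + size s + 1

/-- A variable not belonging to the given finite set. -/
def freshVar (s : Finset ℕ) : ℕ := s.sup id + 1

/-- Fuelled capture-avoiding substitution (the fuel is an upper bound on the
size of the term being substituted into; `size t` is always enough fuel). -/
def substAux : ℕ → Tm → ℕ → Tm → Tm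
  | 0, t, _, _ => t
  | _ + 1, .var y, x, v => if y = x then v else .var y
  | n + 1, .app t s, x, v => .app (substAux n t x v) (substAux n s x v)
  | n + 1, .lam y t, x, v =>
      if y = x then .lam y t
      else if y ∈ fv v ∧ x ∈ fv t then
        let z := freshVar (fv t ∪ fv v ∪ {x, y})
        .lam z (substAux n (substAux n t y (.var z)) x v)
      else .lam y (substAux n t x v)

/-- Capture-avoiding substitution `t[v/x]`. -/
def subst (t : Tm) (x : ℕ) (v : Tm) : Tm := substAux (size t) t x v

/-- Call-by-value evaluation contexts `E ::= [] | E t | v E`. -/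
inductive ECtx : Type
  | hole : ECtx
  | appL : ECtx → Tm → ECtx
  | appR : (v : Tm) → IsValue v → ECtx → ECtx

/-- Plugging a term in an evaluation context. -/
def plug : ECtx → Tm → Tm
  | .hole, t => t
  | .appL E s, t => .app (plug E t) s
  | .appR v _ E, t => .app v (plug E t)

/-- Free variables of an evaluation context. -/
def fvC : ECtx → Finset ℕ
  | .hole => ∅
  | .appL E s => fvC E ∪ fv s
  | .appR v _ E => fv v ∪ fvC E

/-- Call-by-value reduction: `E[(λx.t) v] → E[t[v/x]]`. -/
inductive Step : Tm → Tm → Prop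
  | beta (E : ECtx) (x : ℕ) (t v : Tm) :
      IsValue v → Step (plug E (.app (.lam x t) v)) (plug E (subst t x v))

/-- Reflexive-transitive closure of reduction. -/
def Steps : Tm → Tm → Prop := Relation.ReflTransGen Step

/-- Irreducible terms. -/
def Irred (t : Tm) : Prop := ∀ s, ¬ Step t s

/-- `t` evaluates to `s`. -/
def Eval (t s : Tm) : Prop := Steps t s ∧ Irred s

/-- `v R^v w`: `(v x) R (w x)` for a fresh variable `x`. -/
def ValRel (R : Rel Tm) (v w : Tm) : Prop :=
  ∃ x, x ∉ fv v ∪ fv w ∧ (Tm.app v (.var x), Tm.app w (.var x)) ∈ R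

/-- `E R^c E'`: `E[x] R E'[x]` for a fresh variable `x`. -/
def CtxRel (R : Rel Tm) (E E' : ECtx) : Prop :=
  ∃ x, x ∉ fvC E ∪ fvC E' ∧ (plug E (.var x), plug E' (.var x)) ∈ R

/-- Diacritical progress `R ⤳ S,T`. -/
def Progress (R S T : Rel Tm) : Prop :=
  R ⊆ S ∧ S ⊆ T ∧ ∀ t s, (t, s) ∈ R →
    ((∀ t', Step t t' → ∃ s', Steps s s' ∧ (t', s') ∈ T) ∧
     (IsValue t → ∃ w, IsValue w ∧ Eval s w ∧ ValRel S t w) ∧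
     (∀ E x v, IsValue v → t = plug E (.app (.var x) v) →
        ∃ E' w, IsValue w ∧ Eval s (plug E' (.app (.var x) w)) ∧
          CtxRel T E E' ∧ ValRel T v w) ∧
     (∀ s', Step s s' → ∃ t', Steps t t' ∧ (t', s') ∈ T) ∧
     (IsValue s → ∃ v, IsValue v ∧ Eval t v ∧ ValRel S v s) ∧
     (∀ E' x w, IsValue w → s = plug E' (.app (.var x) w) →
        ∃ E v, IsValue v ∧ Eval t (plug E (.app (.var x) v)) ∧
          CtxRel T E E' ∧ ValRel T v w))

/-- Normal-form bisimulation: `R ⤳ R,R`. -/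
def IsBisim (R : Rel Tm) : Prop := Progress R R R

/-- Normal-form bisimilarity: the union of all normal-form bisimulations. -/
def Bisim : Rel Tm := { p | ∃ R, IsBisim R ∧ p ∈ R }

/-- Up-to technique. -/
def UpTo (f : RelF Tm) : Prop := ∀ R, Progress R R (f R) → R ⊆ Bisim

/-- Strong up-to technique. -/
def StrongUpTo (f : RelF Tm) : Prop := ∀ R, Progress R (f R) (f R) → R ⊆ Bisim

/-- `f` evolves to `g, h`. -/
def Evolve (f g h : RelF Tm) : Prop :=
  ∀ R T, Progress R R T → Progress (f R) (g R) (h T)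

/-- `f` strongly evolves to `g, h`. -/
def SEvolve (f g h : RelF Tm) : Prop :=
  ∀ R S T, Progress R S T → Progress (f R) (g S) (h T)

/-- `F` is diacritically compatible with witness `S ⊆ F`. -/
def Compatible (F S : Set (RelF Tm)) : Prop :=
  S ⊆ F ∧ (∀ f ∈ F, ContinuousF f) ∧
  (∀ f ∈ S, SEvolve f (omegaF (hatF (setF S))) (omegaF (hatF (setF F)))) ∧
  (∀ f ∈ F, Evolve f
    (compF (omegaF (hatF (setF S))) (compF (hatF (setF F)) (omegaF (hatF (setF S)))))
    (omegaF (hatF (setF F))))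

/-! ### Up-to techniques for the λ-calculus -/

/-- Up to reflexivity. -/
def reflF : RelF Tm := fun _ => { p | p.1 = p.2 }

/-- Up to λ-abstraction. -/
def lamF : RelF Tm := fun R => { p | ∃ x t s, (t, s) ∈ R ∧ p = (Tm.lam x t, Tm.lam x s) }

/-- Up to substitution. -/
def substF : RelF Tm := fun R =>
  { p | ∃ t s x v w, (t, s) ∈ R ∧ IsValue v ∧ IsValue w ∧ ValRel R v w ∧
        p = (subst t x v, subst s x w) }

/-- Up to evaluation context. -/
def ectxF : RelF Tm := fun R =>
  { p | ∃ E E' t s, (t, s) ∈ R ∧ CtxRel R E E' ∧ p = (plug E t, plug E' s) }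

/-- Up to reduction. -/
def redF : RelF Tm := fun R =>
  { p | ∃ t' s', Steps p.1 t' ∧ Steps p.2 s' ∧ (t', s') ∈ R }

/-- General contexts: terms with a single hole. -/
inductive GCtx : Type
  | hole : GCtx
  | lam : ℕ → GCtx → GCtx
  | appL : GCtx → Tm → GCtx
  | appR : Tm → GCtx → GCtx

/-- Plugging a term in a general context. -/
def gplug : GCtx → Tm → Tm
  | .hole, t => t
  | .lam x C, t => .lam x (gplug C t)
  | .appL C s, t => .app (gplug C t) s
  | .appR s C, t => .app s (gplug C t)

/-- Up to context. -/
def utctxF : RelF Tm := fun R => { p | ∃ C t s, (t, s) ∈ R ∧ p = (gplug C t, gplug C s) }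

/-!
Reduction is deterministic, so if `t →* t'` and `t → t₁` then either `t = t'` or `t₁ →* t'`;
values and stuck terms `E[x v]` are irreducible, so a term of `red(R)` that is a value or stuck
is already the left-hand side of its `R`-pair. The conditions of `Progress` on the right-hand
term are those on the left-hand term for the inverse relations, and `red` commutes with
inversion, so only the left-hand conditions need checking.
-/

lemma not_isValue_plug_app (E : ECtx) (f a : Tm) : ¬ IsValue (plug E (.app f a)) := by
  cases E <;> exact id

lemma plug_app_inj {E₁ E₂ : ECtx} {f₁ a₁ f₂ a₂ : Tm} (hf₁ : IsValue f₁) (ha₁ : IsValue a₁)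
    (hf₂ : IsValue f₂) (ha₂ : IsValue a₂) (h : plug E₁ (.app f₁ a₁) = plug E₂ (.app f₂ a₂)) :
    E₁ = E₂ ∧ f₁ = f₂ ∧ a₁ = a₂ := by
  induction E₁ generalizing E₂ with
  | hole =>
    cases E₂ <;> simp only [plug, Tm.app.injEq] at h
    case hole => exact ⟨rfl, h⟩
    case appL => exact (not_isValue_plug_app _ _ _ (h.1 ▸ hf₁)).elim
    case appR => exact (not_isValue_plug_app _ _ _ (h.2 ▸ ha₁)).elim
  | appL E s ih =>
    cases E₂ <;> simp only [plug, Tm.app.injEq] at h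
    case hole => exact (not_isValue_plug_app _ _ _ (h.1 ▸ hf₂)).elim
    case appL =>
      obtain ⟨rfl, hf, ha⟩ := ih h.1
      exact ⟨h.2 ▸ rfl, hf, ha⟩
    case appR w hw _ => exact (not_isValue_plug_app _ _ _ (h.1 ▸ hw)).elim
  | appR v hv E ih =>
    cases E₂ <;> simp only [plug, Tm.app.injEq] at h
    case hole => exact (not_isValue_plug_app _ _ _ (h.2 ▸ ha₂)).elim
    case appL => exact (not_isValue_plug_app _ _ _ (h.1 ▸ hv)).elim
    case appR =>
      obtain ⟨rfl, rfl⟩ := h.1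
      obtain ⟨rfl, hf, ha⟩ := ih h.2
      exact ⟨rfl, hf, ha⟩

lemma step_deterministic {t u₁ u₂ : Tm} (h₁ : Step t u₁) (h₂ : Step t u₂) : u₁ = u₂ := by
  obtain ⟨E, x, s, v, hv⟩ := h₁
  generalize ht : plug E (.app (.lam x s) v) = t at h₂
  obtain ⟨E', x', s', v', hv'⟩ := h₂
  obtain ⟨rfl, hlam, rfl⟩ := plug_app_inj (by trivial) hv (by trivial) hv' ht
  obtain ⟨rfl, rfl⟩ := Tm.lam.inj hlam
  rfl

lemma irred_of_isValue {v : Tm} (hv : IsValue v) : Irred v := by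
  rintro _ ⟨E, x, s, w, hw⟩
  exact not_isValue_plug_app E _ _ hv

lemma irred_plug_var_app (E : ECtx) (x : ℕ) {v : Tm} (hv : IsValue v) :
    Irred (plug E (.app (.var x) v)) := by
  intro u h
  generalize ht : plug E (.app (.var x) v) = t at h
  obtain ⟨E', y, s, w, hw⟩ := h
  exact Tm.noConfusion (plug_app_inj (by trivial) hv (by trivial) hw ht).2.1

lemma Irred.eq_of_steps {t u : Tm} (ht : Irred t) (h : Steps t u) : t = u :=
  (Relation.ReflTransGen.cases_head h).elim id fun ⟨_, hstep, _⟩ => (ht _ hstep).elim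

lemma eq_or_steps_of_step_of_steps {t t₁ u : Tm} (h₁ : Step t t₁) (h : Steps t u) :
    t = u ∨ Steps t₁ u :=
  (Relation.ReflTransGen.cases_head h).imp_right fun ⟨_, hstep, hsteps⟩ =>
    step_deterministic h₁ hstep ▸ hsteps

lemma Eval.of_steps {t u w : Tm} (h : Steps t u) (he : Eval u w) : Eval t w :=
  ⟨h.trans he.1, he.2⟩

lemma ValRel.mono {R R' : Rel Tm} (h : R ⊆ R') {v w : Tm} : ValRel R v w → ValRel R' v w
  | ⟨x, hx, hR⟩ => ⟨x, hx, h hR⟩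

lemma CtxRel.mono {R R' : Rel Tm} (h : R ⊆ R') {E E' : ECtx} : CtxRel R E E' → CtxRel R' E E'
  | ⟨x, hx, hR⟩ => ⟨x, hx, h hR⟩

lemma valRel_inv {R : Rel Tm} {v w : Tm} : ValRel (SetRel.inv R) v w ↔ ValRel R w v := by
  simp only [ValRel, SetRel.mem_inv, Finset.union_comm (fv v)]

lemma ctxRel_inv {R : Rel Tm} {E E' : ECtx} : CtxRel (SetRel.inv R) E E' ↔ CtxRel R E' E := by
  simp only [CtxRel, SetRel.mem_inv, Finset.union_comm (fvC E)]

lemma redF_mono {R R' : Rel Tm} (h : R ⊆ R') : redF R ⊆ redF R' :=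
  fun _ ⟨t', s', ht, hs, hR⟩ => ⟨t', s', ht, hs, h hR⟩

lemma redF_inv (R : Rel Tm) : redF (SetRel.inv R) = SetRel.inv (redF R) := by
  ext ⟨t, s⟩
  exact ⟨fun ⟨t', s', ht, hs, hR⟩ => ⟨s', t', hs, ht, hR⟩,
    fun ⟨s', t', hs, ht, hR⟩ => ⟨t', s', ht, hs, hR⟩⟩

lemma unionF_redF_idF_inv (R : Rel Tm) :
    unionF redF idF (SetRel.inv R) = SetRel.inv (unionF redF idF R) := by
  simp only [unionF, idF, redF_inv]
  rfl

def LeftProgress (R S T : Rel Tm) : Prop :=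
  ∀ t s, (t, s) ∈ R →
    (∀ t', Step t t' → ∃ s', Steps s s' ∧ (t', s') ∈ T) ∧
    (IsValue t → ∃ w, IsValue w ∧ Eval s w ∧ ValRel S t w) ∧
    (∀ E x v, IsValue v → t = plug E (.app (.var x) v) →
       ∃ E' w, IsValue w ∧ Eval s (plug E' (.app (.var x) w)) ∧ CtxRel T E E' ∧ ValRel T v w)

lemma progress_iff {R S T : Rel Tm} :
    Progress R S T ↔ R ⊆ S ∧ S ⊆ T ∧ LeftProgress R S T ∧
      LeftProgress (SetRel.inv R) (SetRel.inv S) (SetRel.inv T) := by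
  simp only [Progress, LeftProgress, SetRel.mem_inv, valRel_inv, ctxRel_inv]
  constructor
  · rintro ⟨hRS, hST, h⟩
    refine ⟨hRS, hST, fun t s hts => ?_, fun s t hts => (h t s hts).2.2.2⟩
    obtain ⟨hstep, hval, hstuck, -⟩ := h t s hts
    exact ⟨hstep, hval, hstuck⟩
  · rintro ⟨hRS, hST, hl, hr⟩
    exact ⟨hRS, hST, fun t s hts => ⟨(hl t s hts).1, (hl t s hts).2.1, (hl t s hts).2.2,
      hr s t hts⟩⟩

lemma LeftProgress.redF {R S T : Rel Tm} (h : LeftProgress R S T) (hRT : R ⊆ T) :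
    LeftProgress (redF R) (unionF redF idF S) (unionF redF idF T) := by
  rintro t s ⟨t', s', ht : Steps t t', hs : Steps s s', hR⟩
  obtain ⟨hstep, hval, hstuck⟩ := h t' s' hR
  refine ⟨fun t₁ ht₁ => ?_, fun hv => ?_, fun E x v hv htE => ?_⟩
  · rcases eq_or_steps_of_step_of_steps ht₁ ht with rfl | ht₁'
    · obtain ⟨s₁, hs₁, hT⟩ := hstep t₁ ht₁
      exact ⟨s₁, hs.trans hs₁, Or.inr hT⟩
    · exact ⟨s, .refl, Or.inl ⟨t', s', ht₁', hs, hRT hR⟩⟩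
  · obtain rfl := (irred_of_isValue hv).eq_of_steps ht
    obtain ⟨w, hw, hev, hS⟩ := hval hv
    exact ⟨w, hw, hev.of_steps hs, hS.mono Set.subset_union_right⟩
  · subst htE
    obtain rfl := (irred_plug_var_app E x hv).eq_of_steps ht
    obtain ⟨E', w, hw, hev, hE, hvw⟩ := hstuck E x v hv rfl
    exact ⟨E', w, hw, hev.of_steps hs, hE.mono Set.subset_union_right,
      hvw.mono Set.subset_union_right⟩

/-- `red` strongly evolves to `red ∪ id, red ∪ id`. -/
theorem red_strongly_evolves :
    SEvolve redF (unionF redF idF) (unionF redF idF) := by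
  intro R S T h
  obtain ⟨hRS, hST, hleft, hright⟩ := progress_iff.mp h
  refine progress_iff.mpr ⟨(redF_mono hRS).trans Set.subset_union_left,
    Set.union_subset_union (redF_mono hST) hST, hleft.redF (hRS.trans hST), ?_⟩
  rw [← redF_inv, ← unionF_redF_idF_inv, ← unionF_redF_idF_inv]
  exact hright.redF (SetRel.inv_mono (hRS.trans hST))

end NF
end

section
/- In the call-by-value λ-calculus, normal-form bisimilarity is sound with respect to contextual equivalence: if t ≈ s, then for every context C (a term with a single hole), the evaluation of C[t] terminates (C[t] →* some irreducible term) if and only if the evaluation of C[s] terminates. -/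
namespace NF

/-!
Soundness goes through a step-indexed logical relation for termination. Values `v`, `w` are
related at index `n` when for every `m < n`, arguments related at `m` and evaluation contexts
related at `m`, termination of the left application within `m + 1` steps implies termination
of the right one; a free variable must moreover be matched by a value that gets stuck on every
argument. The relation is compatible with application and abstraction, hence closed under
contexts, and it is adequate for termination.

Its fundamental lemma, that a normal-form bisimulation is contained in it under related
substitutions of values, is proved by induction on the index: run the left term to an
irreducible term, follow it on the right with the bisimulation, and conclude with the value or
the stuck clause. In the stuck case the head variable, once substituted, consumes one step, so
the surrounding contexts need to be related only at smaller indices, where the induction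
hypothesis applies. Bisimilarity is symmetric, which gives the converse implication.

The argument runs on locally nameless terms, where substitution is simultaneous and
capture-free; the translation of named terms preserves and reflects reduction.
-/

/-! ### Named terms -/

lemma freshVar_notMem (s : Finset ℕ) : freshVar s ∉ s := fun h => by
  have := Finset.le_sup (f := id) h
  simp only [freshVar, id] at this
  omega

lemma size_pos (t : Tm) : 0 < size t := by
  cases t <;> simp [size]

lemma Tm.size_induction {P : Tm → Prop} (H : ∀ t, (∀ s, size s < size t → P s) → P t)
    (t : Tm) : P t :=
  (measure size).wf.induction t H

lemma size_substAux_var (n : ℕ) :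
    ∀ t x z, size t ≤ n → size (substAux n t x (.var z)) = size t := by
  induction n with
  | zero => intro t x z _; rfl
  | succ n ih =>
    intro t x z h
    cases t with
    | var y => simp only [substAux]; split <;> rfl
    | app a b =>
      have := size_pos a; have := size_pos b
      simp only [size] at h
      simp only [substAux, size]
      rw [ih a x z (by omega), ih b x z (by omega)]
    | lam y a =>
      have := size_pos a
      simp only [size] at h
      simp only [substAux]
      split_ifs
      · rfl
      · simp only [size]
        rw [ih _ x z (by rw [ih a y _ (by omega)]; omega), ih a y _ (by omega)]
      · simp only [size]
        rw [ih a x z (by omega)]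

lemma substAux_eq_subst (n : ℕ) :
    ∀ t x v, size t ≤ n → substAux n t x v = subst t x v := by
  induction n using Nat.strong_induction_on with
  | _ n ih =>
    intro t x v h
    match n, t with
    | 0, t => exact absurd h (by have := size_pos t; omega)
    | n + 1, .var y => rfl
    | n + 1, .app a b =>
      have := size_pos a; have := size_pos b
      simp only [size] at h
      show Tm.app (substAux n a x v) (substAux n b x v)
        = Tm.app (substAux (size a + size b) a x v) (substAux (size a + size b) b x v)
      rw [ih n (by omega) a x v (by omega), ih n (by omega) b x v (by omega),
        ih _ (by omega) a x v (by omega), ih _ (by omega) b x v (by omega)]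
    | n + 1, .lam y a =>
      have := size_pos a
      simp only [size] at h
      show substAux (n + 1) (Tm.lam y a) x v = substAux (size a + 1) (Tm.lam y a) x v
      simp only [substAux]
      split_ifs
      · rfl
      · have h1 := size_substAux_var n a y (freshVar (fv a ∪ fv v ∪ {x, y})) (by omega)
        have h2 := size_substAux_var (size a) a y (freshVar (fv a ∪ fv v ∪ {x, y})) le_rfl
        rw [ih n (by omega) _ x v (by omega), ih (size a) (by omega) _ x v h2.le,
          ih n (by omega) a y _ (by omega), ih (size a) (by omega) a y _ le_rfl]
      · rw [ih n (by omega) a x v (by omega), ih (size a) (by omega) a x v le_rfl]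

lemma size_subst_var (t : Tm) (x z : ℕ) : size (subst t x (.var z)) = size t :=
  size_substAux_var (size t) t x z le_rfl

lemma subst_var (y x : ℕ) (v : Tm) : subst (.var y) x v = if y = x then v else .var y := rfl

lemma subst_app (a b : Tm) (x : ℕ) (v : Tm) :
    subst (.app a b) x v = .app (subst a x v) (subst b x v) := by
  have := size_pos a; have := size_pos b
  show Tm.app (substAux (size a + size b) a x v) (substAux (size a + size b) b x v) = _
  rw [substAux_eq_subst _ a x v (by omega), substAux_eq_subst _ b x v (by omega)]

lemma subst_lam_self (y : ℕ) (a v : Tm) : subst (.lam y a) y v = .lam y a := by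
  simp [subst, size, substAux]

lemma subst_lam_of_capture {y x : ℕ} {a v : Tm} (hyx : y ≠ x) (hc : y ∈ fv v ∧ x ∈ fv a) :
    subst (.lam y a) x v =
      .lam (freshVar (fv a ∪ fv v ∪ {x, y}))
        (subst (subst a y (.var (freshVar (fv a ∪ fv v ∪ {x, y})))) x v) := by
  show substAux (size a + 1) (Tm.lam y a) x v = _
  simp only [substAux, if_neg hyx, if_pos hc]
  rw [substAux_eq_subst (size a) a y _ le_rfl,
    substAux_eq_subst (size a) _ x v (by rw [size_subst_var])]

lemma subst_lam_of_not_capture {y x : ℕ} {a v : Tm} (hyx : y ≠ x)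
    (hc : ¬ (y ∈ fv v ∧ x ∈ fv a)) : subst (.lam y a) x v = .lam y (subst a x v) := by
  show substAux (size a + 1) (Tm.lam y a) x v = _
  simp only [substAux, if_neg hyx, if_neg hc]
  rw [substAux_eq_subst (size a) a x v le_rfl]

lemma Step.appL {a a' : Tm} (h : Step a a') (b : Tm) : Step (.app a b) (.app a' b) := by
  cases h with | beta E x t v hv => exact Step.beta (.appL E b) x t v hv

lemma Step.appR {b b' : Tm} {v : Tm} (hv : IsValue v) (h : Step b b') :
    Step (.app v b) (.app v b') := by
  cases h with | beta E x t w hw => exact Step.beta (.appR v hv E) x t w hw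

lemma Tm.step_or_value_or_stuck (a : Tm) :
    (∃ b, Step a b) ∨ IsValue a ∨ ∃ E x v, IsValue v ∧ a = plug E (.app (.var x) v) := by
  induction a with
  | var x => exact .inr (.inl trivial)
  | lam x t => exact .inr (.inl trivial)
  | app a b iha ihb =>
    rcases iha with ⟨a', ha'⟩ | hva | ⟨E, x, v, hv, rfl⟩
    · exact .inl ⟨_, ha'.appL b⟩
    · rcases ihb with ⟨b', hb'⟩ | hvb | ⟨E, x, w, hw, rfl⟩
      · exact .inl ⟨_, Step.appR hva hb'⟩
      · cases a with
        | var y => exact .inr (.inr ⟨.hole, y, b, hvb, rfl⟩)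
        | lam y t => exact .inl ⟨_, Step.beta .hole y t b hvb⟩
        | app _ _ => exact hva.elim
      · exact .inr (.inr ⟨.appR a hva E, x, w, hw, rfl⟩)
    · exact .inr (.inr ⟨.appL E b, x, v, hv, rfl⟩)

lemma ValRel.swap {R : Rel Tm} {v w : Tm} (h : ValRel R v w) : ValRel (Prod.swap ⁻¹' R) w v :=
  let ⟨x, hx, hR⟩ := h
  ⟨x, by rwa [Finset.union_comm], hR⟩

lemma CtxRel.swap {R : Rel Tm} {E E' : ECtx} (h : CtxRel R E E') :
    CtxRel (Prod.swap ⁻¹' R) E' E :=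
  let ⟨x, hx, hR⟩ := h
  ⟨x, by rwa [Finset.union_comm], hR⟩

lemma IsBisim.swap {R : Rel Tm} (hR : IsBisim R) : IsBisim (Prod.swap ⁻¹' R) := by
  refine ⟨subset_rfl, subset_rfl, fun a b hab => ?_⟩
  obtain ⟨step, val, stuck, step', val', stuck'⟩ := hR.2.2 b a hab
  refine ⟨step', fun hv => ?_, fun E x v hv he => ?_, step, fun hv => ?_, fun E x v hv he => ?_⟩
  · obtain ⟨w, hw, hev, hR⟩ := val' hv
    exact ⟨w, hw, hev, hR.swap⟩
  · obtain ⟨E', w, hw, hev, hE, hR⟩ := stuck' E x v hv he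
    exact ⟨E', w, hw, hev, hE.swap, hR.swap⟩
  · obtain ⟨w, hw, hev, hR⟩ := val hv
    exact ⟨w, hw, hev, hR.swap⟩
  · obtain ⟨E', w, hw, hev, hE, hR⟩ := stuck E x v hv he
    exact ⟨E', w, hw, hev, hE.swap, hR.swap⟩

/-! ### Locally nameless terms -/

inductive LTm : Type
  | fvar : ℕ → LTm
  | bvar : ℕ → LTm
  | lam : LTm → LTm
  | app : LTm → LTm → LTm

namespace LTm

def fv : LTm → Finset ℕ
  | fvar x => {x}
  | bvar _ => ∅
  | lam t => fv t
  | app t s => fv t ∪ fv s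

def openAt : LTm → ℕ → LTm → LTm
  | fvar x, _, _ => fvar x
  | bvar i, k, e => if i = k then e else bvar i
  | lam t, k, e => lam (openAt t (k + 1) e)
  | app t s, k, e => app (openAt t k e) (openAt s k e)

def LcAt : ℕ → LTm → Prop
  | _, fvar _ => True
  | k, bvar i => i < k
  | k, lam t => LcAt (k + 1) t
  | k, app t s => LcAt k t ∧ LcAt k s

abbrev Lc (t : LTm) : Prop := LcAt 0 t

def IsVal : LTm → Prop
  | fvar _ => True
  | lam _ => True
  | _ => False

def msubst (γ : ℕ → LTm) : LTm → LTm
  | fvar x => γ x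
  | bvar i => bvar i
  | lam t => lam (msubst γ t)
  | app t s => app (msubst γ t) (msubst γ s)

lemma LcAt.mono {t : LTm} {k k' : ℕ} (h : LcAt k t) (hk : k ≤ k') : LcAt k' t := by
  induction t generalizing k k' with
  | fvar => trivial
  | bvar i => exact lt_of_lt_of_le h hk
  | lam t ih => exact ih h (by omega)
  | app t s iht ihs => exact ⟨iht h.1 hk, ihs h.2 hk⟩

lemma openAt_of_lcAt {t : LTm} {k : ℕ} (e : LTm) (h : LcAt k t) : t.openAt k e = t := by
  induction t generalizing k with
  | fvar => rfl
  | bvar i => exact if_neg (Nat.ne_of_lt h)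
  | lam t ih => exact congrArg lam (ih h)
  | app t s iht ihs => exact congrArg₂ app (iht h.1) (ihs h.2)

lemma msubst_fvar (t : LTm) : t.msubst fvar = t := by
  induction t <;> simp_all [msubst]

lemma msubst_congr {γ γ' : ℕ → LTm} {t : LTm} (h : ∀ x ∈ t.fv, γ x = γ' x) :
    t.msubst γ = t.msubst γ' := by
  induction t with
  | fvar x => exact h x (Finset.mem_singleton_self x)
  | bvar => rfl
  | lam t ih => exact congrArg lam (ih h)
  | app t s iht ihs =>
    exact congrArg₂ app (iht fun x hx => h x (Finset.mem_union_left _ hx))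
      (ihs fun x hx => h x (Finset.mem_union_right _ hx))

/-- Substitutions by locally closed values, the ones that commute with reduction. -/
def ValSubst (γ : ℕ → LTm) : Prop := ∀ x, (γ x).IsVal ∧ (γ x).Lc

lemma ValSubst.update {γ : ℕ → LTm} (hγ : ValSubst γ) (z : ℕ) {c : LTm} (hc : c.IsVal)
    (hc' : c.Lc) : ValSubst (Function.update γ z c) := by
  intro x
  rcases eq_or_ne x z with rfl | hx
  · simpa using ⟨hc, hc'⟩
  · simpa [hx] using hγ x

lemma msubst_update_of_notMem {z : ℕ} {t : LTm} (hz : z ∉ t.fv) (γ : ℕ → LTm) (c : LTm) :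
    t.msubst (Function.update γ z c) = t.msubst γ :=
  msubst_congr fun x hx => Function.update_of_ne (by rintro rfl; exact hz hx) _ _

lemma LcAt.msubst {γ : ℕ → LTm} {t : LTm} {k : ℕ} (ht : LcAt k t) (hγ : ∀ x, (γ x).Lc) :
    LcAt k (t.msubst γ) := by
  induction t generalizing k with
  | fvar x => exact (hγ x).mono (Nat.zero_le k)
  | bvar => exact ht
  | lam t ih => exact ih ht
  | app t s iht ihs => exact ⟨iht ht.1, ihs ht.2⟩

lemma msubst_openAt {γ : ℕ → LTm} (hγ : ∀ x, (γ x).Lc) (k : ℕ) (e t : LTm) :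
    (t.openAt k e).msubst γ = (t.msubst γ).openAt k (e.msubst γ) := by
  induction t generalizing k with
  | fvar x => exact (openAt_of_lcAt _ ((hγ x).mono (Nat.zero_le k))).symm
  | bvar i => simp only [LTm.openAt, msubst]; split_ifs <;> rfl
  | lam t ih => exact congrArg lam (ih (k + 1))
  | app t s iht ihs => exact congrArg₂ app (iht k) (ihs k)

lemma msubst_update_openAt {γ : ℕ → LTm} (hγ : ∀ x, (γ x).Lc) {c : LTm} (hc : c.Lc)
    {z : ℕ} {t : LTm} (hz : z ∉ t.fv) :
    (t.openAt 0 (fvar z)).msubst (Function.update γ z c) = (t.msubst γ).openAt 0 c := by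
  have hγ' : ∀ x, (Function.update γ z c x).Lc := fun x => by
    rcases eq_or_ne x z with rfl | hx <;> simp [*]
  rw [msubst_openAt hγ', msubst_update_of_notMem hz]
  simp [msubst]

lemma IsVal.msubst {v : LTm} (hv : v.IsVal) {γ : ℕ → LTm} (hγ : ValSubst γ) :
    (v.msubst γ).IsVal := by
  cases v with
  | fvar x => exact (hγ x).1
  | lam => trivial
  | bvar | app => exact hv.elim

end LTm

inductive LStep : LTm → LTm → Prop
  | beta {t v : LTm} : v.IsVal → LStep (.app (.lam t) v) (t.openAt 0 v)
  | appL {t t' s : LTm} : LStep t t' → LStep (.app t s) (.app t' s)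
  | appR {v s s' : LTm} : v.IsVal → LStep s s' → LStep (.app v s) (.app v s')

def LSteps : LTm → LTm → Prop := Relation.ReflTransGen LStep

def LIrred (a : LTm) : Prop := ∀ b, ¬ LStep a b

def LHalts (a : LTm) : Prop := ∃ u, LSteps a u ∧ LIrred u

def LHaltsWithin : ℕ → LTm → Prop
  | 0, a => LIrred a
  | n + 1, a => LIrred a ∨ ∃ b, LStep a b ∧ LHaltsWithin n b

inductive LCtx : Type
  | hole : LCtx
  | appL : LCtx → LTm → LCtx
  | appR : LTm → LCtx → LCtx

namespace LCtx

def plug : LCtx → LTm → LTm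
  | hole, a => a
  | appL E t, a => .app (plug E a) t
  | appR v E, a => .app v (plug E a)

def Ok : LCtx → Prop
  | hole => True
  | appL E t => Ok E ∧ t.Lc
  | appR v E => v.IsVal ∧ v.Lc ∧ Ok E

def comp : LCtx → LCtx → LCtx
  | hole, F => F
  | appL E t, F => appL (comp E F) t
  | appR v E, F => appR v (comp E F)

def fv : LCtx → Finset ℕ
  | hole => ∅
  | appL E t => fv E ∪ t.fv
  | appR v E => v.fv ∪ fv E

def msubst (γ : ℕ → LTm) : LCtx → LCtx
  | hole => hole
  | appL E t => appL (msubst γ E) (t.msubst γ)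
  | appR v E => appR (v.msubst γ) (msubst γ E)

lemma plug_comp (E F : LCtx) (a : LTm) : (E.comp F).plug a = E.plug (F.plug a) := by
  induction E <;> simp [comp, plug, *]

lemma Ok.comp {E F : LCtx} (hE : E.Ok) (hF : F.Ok) : (E.comp F).Ok := by
  induction E <;> simp_all [LCtx.comp, Ok]

lemma msubst_plug (γ : ℕ → LTm) (E : LCtx) (a : LTm) :
    (E.plug a).msubst γ = (E.msubst γ).plug (a.msubst γ) := by
  induction E <;> simp [plug, msubst, LTm.msubst, *]

lemma Ok.msubst {E : LCtx} (hE : E.Ok) {γ : ℕ → LTm} (hγ : LTm.ValSubst γ) :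
    (E.msubst γ).Ok := by
  induction E with
  | hole => trivial
  | appL E t ih => exact ⟨ih hE.1, hE.2.msubst fun x => (hγ x).2⟩
  | appR v E ih => exact ⟨hE.1.msubst hγ, hE.2.1.msubst fun x => (hγ x).2, ih hE.2.2⟩

lemma comp_hole (E : LCtx) : E.comp hole = E := by
  induction E <;> simp [comp, *]

lemma msubst_congr {γ γ' : ℕ → LTm} {E : LCtx} (h : ∀ x ∈ E.fv, γ x = γ' x) :
    E.msubst γ = E.msubst γ' := by
  induction E with
  | hole => rfl
  | appL E t ih =>
    exact congrArg₂ appL (ih fun x hx => h x (Finset.mem_union_left _ hx))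
      (LTm.msubst_congr fun x hx => h x (Finset.mem_union_right _ hx))
  | appR v E ih =>
    exact congrArg₂ appR (LTm.msubst_congr fun x hx => h x (Finset.mem_union_left _ hx))
      (ih fun x hx => h x (Finset.mem_union_right _ hx))

lemma msubst_update_plug_fvar {z : ℕ} {E : LCtx} (hz : z ∉ E.fv) (γ : ℕ → LTm) (c : LTm) :
    (E.plug (.fvar z)).msubst (Function.update γ z c) = (E.msubst γ).plug c := by
  rw [msubst_plug, msubst_congr (γ' := γ) fun x hx =>
    Function.update_of_ne (by rintro rfl; exact hz hx) _ _]
  simp [LTm.msubst]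

end LCtx

def LTm.IsStuck (a : LTm) : Prop :=
  ∃ E x v, LCtx.Ok E ∧ LTm.IsVal v ∧ a = E.plug (.app (.fvar x) v)

namespace LStep

lemma plug {a b : LTm} (h : LStep a b) {E : LCtx} (hE : E.Ok) : LStep (E.plug a) (E.plug b) := by
  induction E with
  | hole => exact h
  | appL E t ih => exact .appL (ih hE.1)
  | appR v E ih => exact .appR hE.1 (ih hE.2.2)

lemma msubst {a b : LTm} (h : LStep a b) {γ : ℕ → LTm} (hγ : LTm.ValSubst γ) :
    LStep (a.msubst γ) (b.msubst γ) := by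
  induction h with
  | beta hv =>
    rw [LTm.msubst_openAt fun x => (hγ x).2]
    exact .beta (hv.msubst hγ)
  | appL _ ih => exact .appL ih
  | appR hv _ ih => exact .appR (hv.msubst hγ) ih

end LStep

lemma LTm.IsVal.irred {v : LTm} (hv : v.IsVal) : LIrred v := by
  intro b h
  cases h <;> exact hv

lemma LCtx.not_isVal_plug_app (E : LCtx) (a b : LTm) : ¬ (E.plug (.app a b)).IsVal := by
  cases E <;> exact id

lemma LStep.app_inv {a b c : LTm} (h : LStep (.app a b) c) :
    (∃ t, a = .lam t ∧ b.IsVal ∧ c = t.openAt 0 b) ∨ (∃ a', LStep a a' ∧ c = .app a' b) ∨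
      (a.IsVal ∧ ∃ b', LStep b b' ∧ c = .app a b') := by
  cases h with
  | beta hb => exact .inl ⟨_, rfl, hb, rfl⟩
  | appL h => exact .inr (.inl ⟨_, h, rfl⟩)
  | appR ha h => exact .inr (.inr ⟨ha, _, h, rfl⟩)

lemma LTm.IsStuck.irred {a : LTm} (h : a.IsStuck) : LIrred a := by
  obtain ⟨E, x, v, hE, hv, rfl⟩ := h
  induction E with
  | hole =>
    intro b h
    rcases h.app_inv with ⟨t, ht, -⟩ | ⟨a', ha', -⟩ | ⟨-, b', hb', -⟩
    · cases ht
    · exact (show LTm.IsVal (.fvar x) from trivial).irred _ ha'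
    · exact hv.irred _ hb'
  | appL E t ih =>
    intro b h
    rcases h.app_inv with ⟨t, ht, -⟩ | ⟨a', ha', -⟩ | ⟨hval, -⟩
    · cases E <;> cases ht
    · exact ih hE.1 _ ha'
    · exact LCtx.not_isVal_plug_app E _ _ hval
  | appR w E ih =>
    intro b h
    rcases h.app_inv with ⟨t, -, hval, -⟩ | ⟨a', ha', -⟩ | ⟨-, b', hb', -⟩
    · exact LCtx.not_isVal_plug_app E _ _ hval
    · exact hE.1.irred _ ha'
    · exact ih hE.2.2 _ hb'

lemma LStep.det {a b c : LTm} (hb : LStep a b) (hc : LStep a c) : b = c := by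
  induction hb generalizing c with
  | beta hv =>
    rcases hc.app_inv with ⟨t', ht', -, rfl⟩ | ⟨a', ha', -⟩ | ⟨-, b', hb', -⟩
    · cases ht'; rfl
    · exact absurd ha' ((show LTm.IsVal (.lam _) from trivial).irred _)
    · exact absurd hb' (hv.irred _)
  | appL h ih =>
    rcases hc.app_inv with ⟨t', rfl, -, -⟩ | ⟨a', ha', rfl⟩ | ⟨hval, -⟩
    · exact absurd h ((show LTm.IsVal (.lam _) from trivial).irred _)
    · rw [ih ha']
    · exact absurd h (hval.irred _)
  | appR hv h ih =>
    rcases hc.app_inv with ⟨t', -, hvb, -⟩ | ⟨a', ha', -⟩ | ⟨-, b', hb', rfl⟩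
    · exact absurd h (hvb.irred _)
    · exact absurd ha' (hv.irred _)
    · rw [ih hb']

lemma LTm.IsStuck.plug {a : LTm} (h : a.IsStuck) {E : LCtx} (hE : E.Ok) :
    (E.plug a).IsStuck := by
  obtain ⟨F, x, v, hF, hv, rfl⟩ := h
  exact ⟨E.comp F, x, v, hE.comp hF, hv, (LCtx.plug_comp E F _).symm⟩

lemma LTm.Lc.step_or_isVal_or_isStuck {a : LTm} (ha : a.Lc) :
    (∃ b, LStep a b) ∨ a.IsVal ∨ a.IsStuck := by
  induction a with
  | fvar x => exact .inr (.inl trivial)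
  | bvar i => exact absurd ha (Nat.not_lt_zero i)
  | lam t => exact .inr (.inl trivial)
  | app a b iha ihb =>
    rcases iha ha.1 with ⟨a', ha'⟩ | hva | ⟨E, x, v, hE, hv, rfl⟩
    · exact .inl ⟨_, .appL ha'⟩
    · rcases ihb ha.2 with ⟨b', hb'⟩ | hvb | ⟨E, x, v, hE, hv, rfl⟩
      · exact .inl ⟨_, .appR hva hb'⟩
      · cases a with
        | fvar y => exact .inr (.inr ⟨.hole, y, b, trivial, hvb, rfl⟩)
        | lam t => exact .inl ⟨_, .beta hvb⟩
        | bvar | app => exact hva.elim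
      · exact .inr (.inr ⟨.appR a E, x, v, ⟨hva, ha.1, hE⟩, hv, rfl⟩)
    · exact .inr (.inr ⟨.appL E b, x, v, ⟨hE, ha.2⟩, hv, rfl⟩)

lemma LCtx.plug_stuck_inj {E E' : LCtx} {x x' : ℕ} {v v' : LTm} (hE : E.Ok) (hE' : E'.Ok)
    (hv : v.IsVal) (hv' : v'.IsVal)
    (h : E.plug (.app (.fvar x) v) = E'.plug (.app (.fvar x') v')) :
    E = E' ∧ x = x' ∧ v = v' := by
  induction E generalizing E' with
  | hole =>
    cases E' with
    | hole => cases h; exact ⟨rfl, rfl, rfl⟩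
    | appL F t => cases F <;> cases h
    | appR w F => cases h; exact absurd hv (not_isVal_plug_app F _ _)
  | appL E t ih =>
    cases E' with
    | hole => cases E <;> cases h
    | appL F t' =>
      injection h with h ht
      obtain ⟨rfl, rfl, rfl⟩ := ih hE.1 hE'.1 h
      exact ⟨ht ▸ rfl, rfl, rfl⟩
    | appR w F => cases h; exact absurd hE'.1 (not_isVal_plug_app E _ _)
  | appR w E ih =>
    cases E' with
    | hole => cases h; exact absurd hv' (not_isVal_plug_app E _ _)
    | appL F t' => cases h; exact absurd hE.1 (not_isVal_plug_app F _ _)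
    | appR w' F =>
      injection h with hw h
      obtain ⟨rfl, rfl, rfl⟩ := ih hE.2.2 hE'.2.2 h
      exact ⟨hw ▸ rfl, rfl, rfl⟩

namespace LSteps

lemma plug {a b : LTm} (h : LSteps a b) {E : LCtx} (hE : E.Ok) :
    LSteps (E.plug a) (E.plug b) :=
  Relation.ReflTransGen.lift E.plug (fun _ _ h => h.plug hE) _ _ h

lemma msubst {a b : LTm} (h : LSteps a b) {γ : ℕ → LTm} (hγ : LTm.ValSubst γ) :
    LSteps (a.msubst γ) (b.msubst γ) :=
  Relation.ReflTransGen.lift (LTm.msubst γ) (fun _ _ h => h.msubst hγ) _ _ h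

end LSteps

lemma LHalts.of_steps {a b : LTm} (h : LSteps a b) (hb : LHalts b) : LHalts a :=
  let ⟨u, hu, hirr⟩ := hb
  ⟨u, h.trans hu, hirr⟩

lemma LTm.IsStuck.halts {a : LTm} (h : a.IsStuck) : LHalts a :=
  ⟨a, .refl, h.irred⟩

namespace LHaltsWithin

lemma irred {n : ℕ} {a : LTm} (h : LIrred a) : LHaltsWithin n a := by
  cases n with
  | zero => exact h
  | succ n => exact .inl h

lemma mono {m n : ℕ} {a : LTm} (h : LHaltsWithin m a) (hmn : m ≤ n) : LHaltsWithin n a := by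
  induction m generalizing n a with
  | zero => exact irred h
  | succ m ih =>
    obtain ⟨n, rfl⟩ : ∃ k, n = k + 1 := ⟨n - 1, by omega⟩
    rcases h with h | ⟨b, hab, hb⟩
    · exact .inl h
    · exact .inr ⟨b, hab, ih hb (by omega)⟩

lemma of_step {n : ℕ} {a b : LTm} (hab : LStep a b) (h : LHaltsWithin (n + 1) a) :
    LHaltsWithin n b := by
  rcases h with h | ⟨c, hac, hc⟩
  · exact absurd hab (h b)
  · exact hab.det hac ▸ hc

lemma exists_irred_of_lift {Φ : LTm → LTm} (hΦ : ∀ a b, LStep a b → LStep (Φ a) (Φ b)) {n : ℕ} {a : LTm}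
    (h : LHaltsWithin n (Φ a)) : ∃ a', LSteps a a' ∧ LIrred a' ∧ LHaltsWithin n (Φ a') := by
  induction n generalizing a with
  | zero => exact ⟨a, .refl, fun b hab => h _ (hΦ a b hab), h⟩
  | succ n ih =>
    by_cases ha : LIrred a
    · exact ⟨a, .refl, ha, h⟩
    · obtain ⟨b, hab⟩ : ∃ b, LStep a b := by simpa [LIrred] using ha
      obtain ⟨a', hba', ha', h'⟩ := ih (of_step (hΦ a b hab) h)
      exact ⟨a', .head hab hba', ha', h'.mono (Nat.le_succ n)⟩

end LHaltsWithin

lemma LHalts.exists_haltsWithin {a : LTm} (h : LHalts a) : ∃ n, LHaltsWithin n a := by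
  obtain ⟨u, hu, hirr⟩ := h
  induction hu using Relation.ReflTransGen.head_induction_on with
  | refl => exact ⟨0, hirr⟩
  | head hab _ ih =>
    obtain ⟨n, hn⟩ := ih
    exact ⟨n + 1, .inr ⟨_, hab, hn⟩⟩

/-! ### From named to locally nameless terms -/

namespace LTm

def closeAt : LTm → ℕ → ℕ → LTm
  | fvar y, k, x => if y = x then bvar k else fvar y
  | bvar i, _, _ => bvar i
  | lam t, k, x => lam (closeAt t (k + 1) x)
  | app t s, k, x => app (closeAt t k x) (closeAt s k x)

lemma fv_closeAt (t : LTm) (k x : ℕ) : (t.closeAt k x).fv = t.fv \ {x} := by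
  induction t generalizing k with
  | fvar y =>
    by_cases h : y = x
    · simp [closeAt, fv, h]
    · ext z
      simp only [closeAt, h, if_false, fv, Finset.mem_sdiff, Finset.mem_singleton]
      grind
  | bvar => simp [closeAt, fv]
  | lam t ih => exact ih (k + 1)
  | app t s iht ihs => simp only [closeAt, fv, iht, ihs, Finset.union_sdiff_distrib]

lemma LcAt.closeAt {t : LTm} {k : ℕ} (h : LcAt k t) (x : ℕ) : LcAt (k + 1) (t.closeAt k x) := by
  induction t generalizing k with
  | fvar y => by_cases hy : y = x <;> simp [LTm.closeAt, LcAt, hy]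
  | bvar i => exact Nat.lt_succ_of_lt h
  | lam t ih => exact ih h
  | app t s iht ihs => exact ⟨iht h.1, ihs h.2⟩

lemma closeAt_of_notMem {x : ℕ} {t : LTm} (hx : x ∉ t.fv) (k : ℕ) : t.closeAt k x = t := by
  induction t generalizing k with
  | fvar y =>
    have hyx : y ≠ x := by rintro rfl; simp [fv] at hx
    simp [LTm.closeAt, hyx]
  | bvar => rfl
  | lam t ih => exact congrArg lam (ih hx (k + 1))
  | app t s iht ihs =>
    simp only [fv, Finset.mem_union, not_or] at hx
    exact congrArg₂ app (iht hx.1 k) (ihs hx.2 k)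

lemma closeAt_msubst_update {x y : ℕ} (hyx : y ≠ x) {v : LTm} (hy : y ∉ v.fv) (t : LTm)
    (k : ℕ) : (t.msubst (Function.update fvar x v)).closeAt k y =
      (t.closeAt k y).msubst (Function.update fvar x v) := by
  induction t generalizing k with
  | fvar z =>
    by_cases hzx : z = x
    · subst hzx
      simp [msubst, LTm.closeAt, Ne.symm hyx, closeAt_of_notMem hy]
    · by_cases hzy : z = y <;> simp [msubst, LTm.closeAt, hzx, hzy, hyx]
  | bvar => rfl
  | lam t ih => exact congrArg lam (ih (k + 1))
  | app t s iht ihs => exact congrArg₂ app (iht k) (ihs k)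

lemma closeAt_msubst_rename {y z : ℕ} {t : LTm} (hz : z ∉ t.fv) (k : ℕ) :
    (t.msubst (Function.update fvar y (fvar z))).closeAt k z = t.closeAt k y := by
  induction t generalizing k with
  | fvar w =>
    have hwz : w ≠ z := by rintro rfl; simp [fv] at hz
    by_cases hwy : w = y <;> simp [msubst, LTm.closeAt, hwy, hwz]
  | bvar => rfl
  | lam t ih => exact congrArg lam (ih hz (k + 1))
  | app t s iht ihs =>
    simp only [fv, Finset.mem_union, not_or] at hz
    exact congrArg₂ app (iht hz.1 k) (ihs hz.2 k)

lemma openAt_msubst_closeAt {γ : ℕ → LTm} (hγ : ∀ x, (γ x).Lc) {t : LTm} {k : ℕ}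
    (ht : LcAt k t) (x : ℕ) (c : LTm) :
    ((t.closeAt k x).msubst γ).openAt k c = t.msubst (Function.update γ x c) := by
  induction t generalizing k with
  | fvar y =>
    by_cases hyx : y = x
    · simp [LTm.closeAt, msubst, LTm.openAt, hyx]
    · simp [LTm.closeAt, msubst, hyx, openAt_of_lcAt _ ((hγ y).mono (Nat.zero_le k))]
  | bvar i => exact if_neg (Nat.ne_of_lt ht)
  | lam t ih => exact congrArg lam (ih ht)
  | app t s iht ihs => exact congrArg₂ app (iht ht.1) (ihs ht.2)

end LTm

def Tm.toLTm : Tm → LTm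
  | .var x => .fvar x
  | .lam x t => .lam (t.toLTm.closeAt 0 x)
  | .app t s => .app t.toLTm s.toLTm

def ECtx.toLCtx : ECtx → LCtx
  | .hole => .hole
  | .appL E t => .appL E.toLCtx t.toLTm
  | .appR v _ E => .appR v.toLTm E.toLCtx

namespace Tm

lemma fv_toLTm (t : Tm) : t.toLTm.fv = fv t := by
  induction t with
  | var => rfl
  | lam x t ih => simp only [toLTm, LTm.fv, LTm.fv_closeAt, ih, NF.fv]
  | app t s iht ihs => simp only [toLTm, LTm.fv, iht, ihs, NF.fv]

lemma lc_toLTm (t : Tm) : t.toLTm.Lc := by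
  induction t with
  | var => trivial
  | lam x t ih => exact ih.closeAt x
  | app t s iht ihs => exact ⟨iht, ihs⟩

lemma isVal_toLTm {v : Tm} : v.toLTm.IsVal ↔ IsValue v := by
  cases v <;> exact Iff.rfl

lemma toLTm_subst : ∀ (t : Tm) (x : ℕ) (v : Tm),
    (subst t x v).toLTm = t.toLTm.msubst (Function.update .fvar x v.toLTm) := by
  refine Tm.size_induction fun t ih x v => ?_
  have hid : ∀ {a : LTm}, x ∉ a.fv → a.msubst (Function.update .fvar x v.toLTm) = a :=
    fun hx => (LTm.msubst_congr fun y hy =>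
      Function.update_of_ne (by rintro rfl; exact hx hy) _ _).trans (LTm.msubst_fvar _)
  cases t with
  | var y => by_cases hyx : y = x <;> simp [subst_var, toLTm, LTm.msubst, hyx]
  | app a b =>
    rw [subst_app]
    simp only [toLTm, LTm.msubst]
    rw [ih a (by simp [size]) x v, ih b (by simp [size]) x v]
  | lam y a =>
    have hsz : size a < size (.lam y a) := by simp [size]
    by_cases hyx : y = x
    · subst hyx
      rw [subst_lam_self, hid (by simp [toLTm, LTm.fv, LTm.fv_closeAt])]
    · by_cases hc : y ∈ fv v ∧ x ∈ fv a
      · rw [subst_lam_of_capture hyx hc]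
        set z := freshVar (fv a ∪ fv v ∪ {x, y})
        have hz := freshVar_notMem (fv a ∪ fv v ∪ {x, y})
        simp only [Finset.mem_union, Finset.mem_insert, Finset.mem_singleton, not_or] at hz
        simp only [toLTm, LTm.msubst]
        rw [ih _ (by rwa [size_subst_var]) x v, ih a hsz y (.var z),
          LTm.closeAt_msubst_update hz.2.1 (by rw [fv_toLTm]; exact hz.1.2) _ 0]
        simp only [toLTm]
        rw [LTm.closeAt_msubst_rename (by rw [fv_toLTm]; exact hz.1.1)]
      · rw [subst_lam_of_not_capture hyx hc]
        simp only [toLTm, LTm.msubst]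
        rw [ih a hsz x v]
        by_cases hxa : x ∈ fv a
        · rw [LTm.closeAt_msubst_update hyx (by rw [fv_toLTm]; tauto)]
        · rw [hid (by rwa [fv_toLTm]), hid (by simp [LTm.fv_closeAt, fv_toLTm, hxa])]

lemma toLTm_subst_eq_openAt (t : Tm) (x : ℕ) (v : Tm) :
    (subst t x v).toLTm = (t.toLTm.closeAt 0 x).openAt 0 v.toLTm := by
  rw [toLTm_subst, ← LTm.openAt_msubst_closeAt (γ := .fvar) (fun _ => trivial) t.lc_toLTm,
    LTm.msubst_fvar]

end Tm

lemma ECtx.toLTm_plug (E : ECtx) (a : Tm) : (plug E a).toLTm = E.toLCtx.plug a.toLTm := by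
  induction E <;> simp [plug, ECtx.toLCtx, LCtx.plug, Tm.toLTm, *]

lemma ECtx.ok_toLCtx (E : ECtx) : E.toLCtx.Ok := by
  induction E with
  | hole => trivial
  | appL E t ih => exact ⟨ih, t.lc_toLTm⟩
  | appR v hv E ih => exact ⟨Tm.isVal_toLTm.mpr hv, v.lc_toLTm, ih⟩

lemma ECtx.fv_toLCtx (E : ECtx) : E.toLCtx.fv = fvC E := by
  induction E <;> simp [ECtx.toLCtx, LCtx.fv, fvC, Tm.fv_toLTm, *]

lemma Step.toLTm {a b : Tm} (h : Step a b) : LStep a.toLTm b.toLTm := by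
  cases h with
  | beta E x t v hv =>
    rw [ECtx.toLTm_plug, ECtx.toLTm_plug, Tm.toLTm_subst_eq_openAt]
    exact LStep.beta (Tm.isVal_toLTm.mpr hv) |>.plug E.ok_toLCtx

lemma Steps.toLTm {a b : Tm} (h : Steps a b) : LSteps a.toLTm b.toLTm :=
  Relation.ReflTransGen.lift Tm.toLTm (fun _ _ h => h.toLTm) _ _ h

namespace Tm

lemma isStuck_toLTm {E : ECtx} {x : ℕ} {v : Tm} (hv : IsValue v) :
    (plug E (.app (.var x) v)).toLTm.IsStuck :=
  ⟨E.toLCtx, x, v.toLTm, E.ok_toLCtx, isVal_toLTm.mpr hv, E.toLTm_plug _⟩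

lemma exists_step_of_lStep {a : Tm} {d : LTm} (h : LStep a.toLTm d) :
    ∃ b, Step a b ∧ d = b.toLTm := by
  rcases a.step_or_value_or_stuck with ⟨b, hb⟩ | hv | ⟨E, x, v, hv, rfl⟩
  · exact ⟨b, hb, h.det hb.toLTm⟩
  · exact absurd h ((isVal_toLTm.mpr hv).irred d)
  · exact absurd h ((isStuck_toLTm hv).irred d)

lemma lIrred_toLTm {a : Tm} (h : Irred a) : LIrred a.toLTm := fun _ hd =>
  let ⟨b, hb, _⟩ := exists_step_of_lStep hd
  h b hb

lemma eval_iff_lHalts (a : Tm) : (∃ u, Eval a u) ↔ LHalts a.toLTm := by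
  constructor
  · rintro ⟨u, hu, hirr⟩
    exact ⟨u.toLTm, Steps.toLTm hu, lIrred_toLTm hirr⟩
  · rintro ⟨d, hd, hirr⟩
    generalize hA : a.toLTm = A at hd
    induction hd using Relation.ReflTransGen.head_induction_on generalizing a with
    | refl => exact ⟨a, .refl, fun b hb => hirr _ (hA ▸ hb.toLTm)⟩
    | head hAB _ ih =>
      obtain ⟨b, hab, rfl⟩ := exists_step_of_lStep (hA ▸ hAB)
      obtain ⟨u, hu, hu'⟩ := ih b rfl
      exact ⟨u, .head hab hu, hu'⟩

end Tm

def LValRel (R : Rel LTm) (v w : LTm) : Prop :=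
  ∃ z, z ∉ v.fv ∪ w.fv ∧ (LTm.app v (.fvar z), LTm.app w (.fvar z)) ∈ R

def LCtxRel (R : Rel LTm) (E E' : LCtx) : Prop :=
  ∃ z, z ∉ E.fv ∪ E'.fv ∧ (E.plug (.fvar z), E'.plug (.fvar z)) ∈ R

/-- The clauses of normal-form bisimulation, on locally nameless terms, in which the left
term leads. -/
structure LSim (R : Rel LTm) : Prop where
  lc : ∀ ⦃a b⦄, (a, b) ∈ R → a.Lc ∧ b.Lc
  step : ∀ ⦃a b a'⦄, (a, b) ∈ R → LStep a a' → ∃ b', LSteps b b' ∧ (a', b') ∈ R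
  val : ∀ ⦃a b⦄, (a, b) ∈ R → a.IsVal → ∃ w, LSteps b w ∧ w.IsVal ∧ LValRel R a w
  stuck : ∀ ⦃a b E x v⦄, (a, b) ∈ R → LCtx.Ok E → LTm.IsVal v →
    a = E.plug (.app (.fvar x) v) → ∃ E' w, E'.Ok ∧ w.IsVal ∧
      LSteps b (E'.plug (.app (.fvar x) w)) ∧ LCtxRel R E E' ∧ LValRel R v w

section Transfer

variable {R : Rel Tm}

local notation "Rˡ" => Prod.map Tm.toLTm Tm.toLTm '' R

lemma ValRel.toLTm {v w : Tm} (h : ValRel R v w) : LValRel Rˡ v.toLTm w.toLTm := by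
  obtain ⟨z, hz, hR⟩ := h
  exact ⟨z, by rwa [Tm.fv_toLTm, Tm.fv_toLTm], _, hR, rfl⟩

lemma CtxRel.toLTm {E E' : ECtx} (h : CtxRel R E E') : LCtxRel Rˡ E.toLCtx E'.toLCtx := by
  obtain ⟨z, hz, hR⟩ := h
  exact ⟨z, by rwa [ECtx.fv_toLCtx, ECtx.fv_toLCtx], _, hR, by
    simp only [Prod.map, ECtx.toLTm_plug]; rfl⟩

lemma IsBisim.lSim (hR : IsBisim R) : LSim Rˡ where
  lc := by
    rintro _ _ ⟨⟨t, s⟩, -, ⟨⟩⟩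
    exact ⟨t.lc_toLTm, s.lc_toLTm⟩
  step := by
    rintro _ _ a' ⟨⟨t, s⟩, hts, ⟨⟩⟩ ha
    obtain ⟨t', ht', rfl⟩ := Tm.exists_step_of_lStep ha
    obtain ⟨s', hs', hR'⟩ := (hR.2.2 t s hts).1 t' ht'
    exact ⟨s'.toLTm, Steps.toLTm hs', _, hR', rfl⟩
  val := by
    rintro _ _ ⟨⟨t, s⟩, hts, ⟨⟩⟩ hv
    obtain ⟨w, hw, ⟨hsw, -⟩, hR'⟩ := (hR.2.2 t s hts).2.1 (Tm.isVal_toLTm.mp hv)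
    exact ⟨w.toLTm, Steps.toLTm hsw, Tm.isVal_toLTm.mpr hw, hR'.toLTm⟩
  stuck := by
    rintro _ _ E x v ⟨⟨t, s⟩, hts, ⟨⟩⟩ hE hv ht
    rcases t.step_or_value_or_stuck with ⟨t', ht'⟩ | htv | ⟨E₀, x₀, v₀, hv₀, rfl⟩
    · exact absurd ht'.toLTm (ht ▸ LTm.IsStuck.irred ⟨E, x, v, hE, hv, rfl⟩ _)
    · exact absurd (Tm.isVal_toLTm.mpr htv) (ht ▸ LCtx.not_isVal_plug_app E _ _)
    · obtain ⟨rfl, rfl, rfl⟩ := LCtx.plug_stuck_inj hE E₀.ok_toLCtx hv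
        (Tm.isVal_toLTm.mpr hv₀) (ht.symm.trans (E₀.toLTm_plug _))
      obtain ⟨E', w, hw, ⟨hsw, -⟩, hE', hR'⟩ := (hR.2.2 _ s hts).2.2.1 E₀ _ v₀ hv₀ rfl
      refine ⟨E'.toLCtx, w.toLTm, E'.ok_toLCtx, Tm.isVal_toLTm.mpr hw, ?_, hE'.toLTm, hR'.toLTm⟩
      exact E'.toLTm_plug (.app (.var x) w) ▸ Steps.toLTm hsw

end Transfer

/-! ### A step-indexed logical relation for termination -/

def ORel (n : ℕ) (a b : LTm) : Prop := LHaltsWithin n a → LHalts b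

def AppStuck (v w : LTm) : Prop :=
  ∀ x, v = .fvar x → ∀ d, d.IsVal → d.Lc → ∃ S, LSteps (.app w d) S ∧ S.IsStuck

/-- The hypothesis on `E` and `F` is `KRel m E F` below, inlined for the recursion. -/
def VRel (n : ℕ) (v w : LTm) : Prop :=
  v.IsVal ∧ w.IsVal ∧ v.Lc ∧ w.Lc ∧ AppStuck v w ∧
    ∀ m < n, ∀ (c d : LTm) (E F : LCtx), VRel m c d →
      (E.Ok ∧ F.Ok ∧ ∀ k ≤ m, ∀ p q, VRel k p q → ORel k (E.plug p) (F.plug q)) →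
      ORel (m + 1) (E.plug (.app v c)) (F.plug (.app w d))
termination_by n
decreasing_by all_goals omega

def KRel (n : ℕ) (E F : LCtx) : Prop :=
  E.Ok ∧ F.Ok ∧ ∀ m ≤ n, ∀ p q, VRel m p q → ORel m (E.plug p) (F.plug q)

def TRel (n : ℕ) (a b : LTm) : Prop := ∀ E F, KRel n E F → ORel n (E.plug a) (F.plug b)

def EnvRel (n : ℕ) (γ γ' : ℕ → LTm) : Prop := ∀ x, VRel n (γ x) (γ' x)

def OpenRel (a b : LTm) : Prop :=
  ∀ n γ γ', EnvRel n γ γ' → TRel n (a.msubst γ) (b.msubst γ')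

lemma vRel_iff {n : ℕ} {v w : LTm} : VRel n v w ↔
    v.IsVal ∧ w.IsVal ∧ v.Lc ∧ w.Lc ∧ AppStuck v w ∧
      ∀ m < n, ∀ (c d : LTm) (E F : LCtx), VRel m c d → KRel m E F →
        ORel (m + 1) (E.plug (.app v c)) (F.plug (.app w d)) := by
  rw [VRel]
  rfl

namespace ORel

lemma of_step_left {n : ℕ} {a a' b : LTm} (h : LStep a a') (ho : ORel n a' b) :
    ORel (n + 1) a b :=
  fun ha => ho (ha.of_step h)

lemma of_steps_right {n : ℕ} {a b b' : LTm} (h : LSteps b b') (ho : ORel n a b') :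
    ORel n a b :=
  fun ha => (ho ha).of_steps h

end ORel

namespace VRel

variable {n : ℕ} {v w : LTm}

lemma isVal (h : VRel n v w) : v.IsVal ∧ w.IsVal := ⟨(vRel_iff.mp h).1, (vRel_iff.mp h).2.1⟩

lemma lc (h : VRel n v w) : v.Lc ∧ w.Lc := ⟨(vRel_iff.mp h).2.2.1, (vRel_iff.mp h).2.2.2.1⟩

lemma appStuck (h : VRel n v w) : AppStuck v w := (vRel_iff.mp h).2.2.2.2.1

lemma apply (h : VRel n v w) {m : ℕ} (hm : m < n) {c d : LTm} {E F : LCtx} (hcd : VRel m c d)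
    (hEF : KRel m E F) : ORel (m + 1) (E.plug (.app v c)) (F.plug (.app w d)) :=
  (vRel_iff.mp h).2.2.2.2.2 m hm c d E F hcd hEF

lemma mono (h : VRel n v w) {m : ℕ} (hmn : m ≤ n) : VRel m v w := by
  obtain ⟨h1, h2, h3, h4, h5, h6⟩ := vRel_iff.mp h
  exact vRel_iff.mpr ⟨h1, h2, h3, h4, h5, fun k hk => h6 k (by omega)⟩

lemma fvar (n x : ℕ) : VRel n (.fvar x) (.fvar x) := by
  refine vRel_iff.mpr ⟨trivial, trivial, trivial, trivial, ?_, ?_⟩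
  · rintro _ - d hd -
    exact ⟨_, .refl, .hole, x, d, trivial, hd, rfl⟩
  · intro m _ c d E F hcd hEF _
    exact LTm.IsStuck.halts ⟨F, x, d, hEF.2.1, hcd.isVal.2, rfl⟩

end VRel

lemma KRel.mono {n m : ℕ} {E F : LCtx} (h : KRel n E F) (hmn : m ≤ n) : KRel m E F :=
  ⟨h.1, h.2.1, fun k hk => h.2.2 k (hk.trans hmn)⟩

lemma KRel.hole (n : ℕ) : KRel n .hole .hole :=
  ⟨trivial, trivial, fun _ _ _ q hpq _ => ⟨q, .refl, hpq.isVal.2.irred⟩⟩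

lemma TRel.of_vRel {n : ℕ} {v w : LTm} (h : VRel n v w) : TRel n v w :=
  fun _ _ hEF => hEF.2.2 n le_rfl _ _ h

namespace EnvRel

variable {n : ℕ} {γ γ' : ℕ → LTm}

lemma mono (h : EnvRel n γ γ') {m : ℕ} (hmn : m ≤ n) : EnvRel m γ γ' :=
  fun x => (h x).mono hmn

lemma left (h : EnvRel n γ γ') : LTm.ValSubst γ := fun x => ⟨(h x).isVal.1, (h x).lc.1⟩

lemma right (h : EnvRel n γ γ') : LTm.ValSubst γ' := fun x => ⟨(h x).isVal.2, (h x).lc.2⟩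

lemma update (h : EnvRel n γ γ') (z : ℕ) {c d : LTm} (hcd : VRel n c d) :
    EnvRel n (Function.update γ z c) (Function.update γ' z d) := by
  intro x
  rcases eq_or_ne x z with rfl | hx
  · simpa using hcd
  · simpa [hx] using h x

lemma fvar (n : ℕ) : EnvRel n .fvar .fvar := VRel.fvar n

end EnvRel

lemma OpenRel.lHalts {a b : LTm} (h : OpenRel a b) (ha : LHalts a) : LHalts b := by
  obtain ⟨n, hn⟩ := ha.exists_haltsWithin
  have := h n _ _ (EnvRel.fvar n) .hole .hole (KRel.hole n)
  rw [LTm.msubst_fvar, LTm.msubst_fvar] at this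
  exact this hn

lemma VRel.oRel_app {n : ℕ} {f f' c d : LTm} (hf : VRel n f f') (hcd : VRel n c d) {G G' : LCtx}
    (hG : G.Ok) (hG' : G'.Ok) (hK : ∀ k < n, KRel k G G') :
    ORel n (G.plug (.app f c)) (G'.plug (.app f' d)) := by
  cases n with
  | zero =>
    intro h0
    cases f with
    | fvar x =>
      obtain ⟨S, hS, hSt⟩ := hf.appStuck x rfl d hcd.isVal.2 hcd.lc.2
      exact (hSt.plug hG').halts.of_steps (hS.plug hG')
    | lam t => exact absurd ((LStep.beta hcd.isVal.1).plug hG) (h0 _)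
    | bvar | app => exact hf.isVal.1.elim
  | succ k => exact hf.apply k.lt_succ_self (hcd.mono k.le_succ) (hK k k.lt_succ_self)

lemma KRel.comp_appR {n : ℕ} {F F' : LCtx} (hK : KRel n F F') {v w : LTm} (hvw : VRel n v w) :
    KRel n (F.comp (.appR v .hole)) (F'.comp (.appR w .hole)) := by
  refine ⟨hK.1.comp ⟨hvw.isVal.1, hvw.lc.1, trivial⟩,
    hK.2.1.comp ⟨hvw.isVal.2, hvw.lc.2, trivial⟩, fun m hm c d hcd => ?_⟩
  simp only [LCtx.plug_comp, LCtx.plug]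
  exact (hvw.mono hm).oRel_app hcd hK.1 hK.2.1 fun k hk => hK.mono (by omega)

lemma KRel.comp_appL {n : ℕ} {F F' : LCtx} (hK : KRel n F F') {a b : LTm} (ha : a.Lc)
    (hb : b.Lc) (hab : ∀ m ≤ n, TRel m a b) :
    KRel n (F.comp (.appL .hole a)) (F'.comp (.appL .hole b)) := by
  refine ⟨hK.1.comp ⟨trivial, ha⟩, hK.2.1.comp ⟨trivial, hb⟩, fun m hm v w hvw => ?_⟩
  have := hab m hm _ _ ((hK.mono hm).comp_appR hvw)
  simpa only [LCtx.plug_comp, LCtx.plug] using this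

lemma OpenRel.app {a₁ a₂ b₁ b₂ : LTm} (h₁ : OpenRel a₁ b₁) (h₂ : OpenRel a₂ b₂) (ha₂ : a₂.Lc)
    (hb₂ : b₂.Lc) : OpenRel (.app a₁ a₂) (.app b₁ b₂) := by
  intro n γ γ' hγ F F' hK
  have := h₁ n γ γ' hγ _ _ <| hK.comp_appL (ha₂.msubst fun x => (hγ.left x).2)
    (hb₂.msubst fun x => (hγ.right x).2) fun m hm => h₂ m γ γ' (hγ.mono hm)
  simpa only [LCtx.plug_comp, LCtx.plug, LTm.msubst] using this

lemma VRel.lam {n : ℕ} {t t' : LTm} (ht : (LTm.lam t).Lc) (ht' : (LTm.lam t').Lc)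
    (h : ∀ m < n, ∀ c d, VRel m c d → TRel m (t.openAt 0 c) (t'.openAt 0 d)) :
    VRel n (.lam t) (.lam t') := by
  refine vRel_iff.mpr ⟨trivial, trivial, ht, ht', by rintro _ ⟨⟩, ?_⟩
  intro m hm c d E F hcd hEF
  refine ((h m hm c d hcd E F hEF).of_steps_right ?_).of_step_left
    ((LStep.beta hcd.isVal.1).plug hEF.1)
  exact .single ((LStep.beta hcd.isVal.2).plug hEF.2.1)

lemma OpenRel.lam_closeAt {a b : LTm} (h : OpenRel a b) (ha : a.Lc) (hb : b.Lc) (x : ℕ) :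
    OpenRel (.lam (a.closeAt 0 x)) (.lam (b.closeAt 0 x)) := by
  intro n γ γ' hγ
  refine TRel.of_vRel (VRel.lam ((ha.closeAt x).msubst fun y => (hγ.left y).2)
    ((hb.closeAt x).msubst fun y => (hγ.right y).2) fun m hm c d hcd => ?_)
  rw [LTm.openAt_msubst_closeAt (fun y => (hγ.left y).2) ha,
    LTm.openAt_msubst_closeAt (fun y => (hγ.right y).2) hb]
  exact h m _ _ ((hγ.mono hm.le).update x hcd)

lemma OpenRel.fvar (x : ℕ) : OpenRel (.fvar x) (.fvar x) :=
  fun _ _ _ hγ => TRel.of_vRel (hγ x)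

lemma Tm.openRel_toLTm (t : Tm) : OpenRel t.toLTm t.toLTm := by
  induction t with
  | var x => exact OpenRel.fvar x
  | lam x t ih => exact ih.lam_closeAt t.lc_toLTm t.lc_toLTm x
  | app t s iht ihs => exact iht.app ihs s.lc_toLTm s.lc_toLTm

lemma OpenRel.gplug {t s : Tm} (h : OpenRel t.toLTm s.toLTm) (C : GCtx) :
    OpenRel (gplug C t).toLTm (gplug C s).toLTm := by
  induction C with
  | hole => exact h
  | lam x C ih => exact ih.lam_closeAt (Tm.lc_toLTm _) (Tm.lc_toLTm _) x
  | appL C u ih => exact ih.app u.openRel_toLTm u.lc_toLTm u.lc_toLTm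
  | appR u C ih => exact u.openRel_toLTm.app ih (Tm.lc_toLTm _) (Tm.lc_toLTm _)

/-! ### The fundamental lemma -/

def FundamentalAt (R : Rel LTm) (n : ℕ) : Prop :=
  ∀ a b, (a, b) ∈ R → ∀ γ γ', EnvRel n γ γ' → TRel n (a.msubst γ) (b.msubst γ')

def ValFundamentalAt (R : Rel LTm) (n : ℕ) : Prop :=
  ∀ v w, v.IsVal → w.IsVal → LValRel R v w →
    ∀ γ γ', EnvRel n γ γ' → VRel n (v.msubst γ) (w.msubst γ')

lemma KRel.comp_msubst_of_fundamentalAt {R : Rel LTm} {n : ℕ}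
    (hT : ∀ m ≤ n, FundamentalAt R m) {E E' : LCtx}
    (hEE' : LCtxRel R E E') (hE : E.Ok) (hE' : E'.Ok) {γ γ' : ℕ → LTm} (hγ : EnvRel n γ γ')
    {F F' : LCtx} (hK : KRel n F F') : KRel n (F.comp (E.msubst γ)) (F'.comp (E'.msubst γ')) := by
  refine ⟨hK.1.comp (hE.msubst hγ.left), hK.2.1.comp (hE'.msubst hγ.right), fun m hm p q hpq => ?_⟩
  obtain ⟨z, hz, hR'⟩ := hEE'
  simp only [Finset.mem_union, not_or] at hz
  have := hT m hm _ _ hR' _ _ ((hγ.mono hm).update z hpq) F F' (hK.mono hm)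
  rwa [LCtx.msubst_update_plug_fvar hz.1, LCtx.msubst_update_plug_fvar hz.2,
    ← LCtx.plug_comp, ← LCtx.plug_comp] at this

namespace LSim

variable {R : Rel LTm}

lemma steps (hR : LSim R) {a b a' : LTm} (hab : (a, b) ∈ R) (h : LSteps a a') :
    ∃ b', LSteps b b' ∧ (a', b') ∈ R := by
  induction h with
  | refl => exact ⟨b, .refl, hab⟩
  | tail _ h ih =>
    obtain ⟨b₁, hb₁, hR₁⟩ := ih
    obtain ⟨b₂, hb₂, hR₂⟩ := hR.step hR₁ h
    exact ⟨b₂, hb₁.trans hb₂, hR₂⟩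

lemma lc_of_lValRel (hR : LSim R) {v w : LTm} (h : LValRel R v w) : v.Lc ∧ w.Lc :=
  let ⟨_, _, hvw⟩ := h
  ⟨(hR.lc hvw).1.1, (hR.lc hvw).2.1⟩

lemma vRel_msubst_lam (hR : LSim R) {n : ℕ} (hT : ∀ m < n, FundamentalAt R m) {t w : LTm}
    (hw : w.IsVal) (htw : LValRel R (.lam t) w) {γ γ' : ℕ → LTm} (hγ : EnvRel n γ γ') :
    VRel n ((LTm.lam t).msubst γ) (w.msubst γ') := by
  obtain ⟨htl, hwl⟩ := hR.lc_of_lValRel htw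
  obtain ⟨z, hz, hR'⟩ := htw
  simp only [LTm.fv, Finset.mem_union, not_or] at hz
  obtain ⟨b, hwb, hR''⟩ := hR.step hR' (LStep.beta trivial)
  refine vRel_iff.mpr ⟨trivial, hw.msubst hγ.right, htl.msubst fun x => (hγ.left x).2,
    hwl.msubst fun x => (hγ.right x).2, by rintro _ ⟨⟩, fun m hm c d E F hcd hEF => ?_⟩
  have hδ := (hγ.mono hm.le).update z hcd
  have := hT m hm _ _ hR'' _ _ hδ E F hEF
  rw [LTm.msubst_update_openAt (fun x => (hγ.left x).2) hcd.lc.1 hz.1] at this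
  refine (this.of_steps_right ?_).of_step_left ((LStep.beta hcd.isVal.1).plug hEF.1)
  have := (hwb.msubst hδ.right).plug hEF.2.1
  rwa [LTm.msubst, LTm.msubst_update_of_notMem hz.2, LTm.msubst,
    Function.update_self] at this

lemma vRel_msubst_fvar (hR : LSim R) {n : ℕ} (hT : ∀ m < n, FundamentalAt R m)
    (hV : ∀ m < n, ValFundamentalAt R m) {y : ℕ} {w : LTm} (hw : w.IsVal)
    (hyw : LValRel R (.fvar y) w) {γ γ' : ℕ → LTm} (hγ : EnvRel n γ γ') :
    VRel n (γ y) (w.msubst γ') := by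
  have hwl := (hR.lc_of_lValRel hyw).2
  obtain ⟨z, hz, hR'⟩ := hyw
  simp only [LTm.fv, Finset.mem_union, Finset.mem_singleton, not_or] at hz
  obtain ⟨E', w', hE', hw', hsteps, hctx, hval⟩ :=
    hR.stuck hR' (E := .hole) (x := y) (v := .fvar z) trivial trivial rfl
  have hw'l := (hR.lc_of_lValRel hval).2
  -- `w z` reduces to `E'[y w']`; instantiate `z` by an argument `d`
  have hright : ∀ d, d.IsVal → d.Lc → LSteps (.app (w.msubst γ') d)
      ((E'.msubst (Function.update γ' z d)).plug
        (.app (γ' y) (w'.msubst (Function.update γ' z d)))) := by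
    intro d hd hdl
    have := hsteps.msubst (hγ.right.update z hd hdl)
    rwa [LCtx.msubst_plug, LTm.msubst, LTm.msubst, LTm.msubst, LTm.msubst,
      LTm.msubst_update_of_notMem hz.2, Function.update_self,
      Function.update_of_ne (Ne.symm hz.1)] at this
  refine vRel_iff.mpr ⟨(hγ y).isVal.1, hw.msubst hγ.right, (hγ y).lc.1,
    hwl.msubst fun x => (hγ.right x).2, ?_, fun m hm c d E F hcd hEF => ?_⟩
  · intro x hx d hd hdl
    have hδ := hγ.right.update z hd hdl
    obtain ⟨S, hS, hSt⟩ := (hγ y).appStuck x hx _ (hw'.msubst hδ)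
      (hw'l.msubst fun x => (hδ x).2)
    exact ⟨_, (hright d hd hdl).trans (hS.plug (hE'.msubst hδ)), hSt.plug (hE'.msubst hδ)⟩
  · have hδ := (hγ.mono hm.le).update z hcd
    have hv := hV m hm (.fvar z) _ trivial hw' hval _ _ hδ
    rw [LTm.msubst, Function.update_self] at hv
    have hK := KRel.comp_msubst_of_fundamentalAt (fun k hk => hT k (by omega)) hctx trivial
      hE' hδ hEF
    rw [LCtx.msubst, LCtx.comp_hole] at hK
    refine ((hγ y).apply hm hv hK).of_steps_right ?_
    rw [LCtx.plug_comp]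
    exact (hright d hcd.isVal.2 hcd.lc.2).plug hEF.2.1

lemma valFundamentalAt (hR : LSim R) {n : ℕ} (hT : ∀ m < n, FundamentalAt R m) :
    ValFundamentalAt R n := by
  induction n using Nat.strong_induction_on with
  | _ n ih =>
    intro v w hv hw hvw γ γ' hγ
    cases v with
    | lam t => exact hR.vRel_msubst_lam hT hw hvw hγ
    | fvar y =>
      exact hR.vRel_msubst_fvar hT (fun m hm => ih m hm fun k hk => hT k (hk.trans hm)) hw hvw hγ
    | bvar | app => exact hv.elim

lemma fundamentalAt_of_lt (hR : LSim R) {n : ℕ} (hT : ∀ m < n, FundamentalAt R m) :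
    FundamentalAt R n := by
  intro a b hab γ γ' hγ F F' hK hhalt
  obtain ⟨a', haa', ha'irr, hhalt'⟩ := LHaltsWithin.exists_irred_of_lift (Φ := fun a => F.plug (a.msubst γ))
    (fun _ _ h => (h.msubst hγ.left).plug hK.1) hhalt
  obtain ⟨b', hbb', hR'⟩ := hR.steps hab haa'
  suffices LHalts (F'.plug (b'.msubst γ')) from
    this.of_steps ((hbb'.msubst hγ.right).plug hK.2.1)
  rcases (hR.lc hR').1.step_or_isVal_or_isStuck with ⟨c, hc⟩ | hv | ⟨E, y, v, hE, hv, rfl⟩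
  · exact absurd hc (ha'irr c)
  · obtain ⟨w, hw, hwv, hvw⟩ := hR.val hR' hv
    refine LHalts.of_steps ((hw.msubst hγ.right).plug hK.2.1) ?_
    exact hK.2.2 n le_rfl _ _ (hR.valFundamentalAt hT _ _ hv hwv hvw γ γ' hγ) hhalt'
  · obtain ⟨E', w, hE', hw, hsteps, hctx, hvw⟩ := hR.stuck hR' hE hv rfl
    refine LHalts.of_steps ((hsteps.msubst hγ.right).plug hK.2.1) ?_
    have := VRel.oRel_app (hγ y) (hR.valFundamentalAt hT _ _ hv hw hvw γ γ' hγ)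
      (hK.1.comp (hE.msubst hγ.left)) (hK.2.1.comp (hE'.msubst hγ.right)) fun k hk =>
        KRel.comp_msubst_of_fundamentalAt (fun m hm => hT m (by omega)) hctx hE hE'
          (hγ.mono hk.le) (hK.mono hk.le)
    simp only [LCtx.msubst_plug, LCtx.plug_comp, LTm.msubst] at this hhalt' ⊢
    exact this hhalt'

lemma fundamentalAt (hR : LSim R) (n : ℕ) : FundamentalAt R n := by
  induction n using Nat.strong_induction_on with
  | _ n ih => exact hR.fundamentalAt_of_lt ih

lemma openRel (hR : LSim R) {a b : LTm} (h : (a, b) ∈ R) : OpenRel a b :=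
  fun n γ γ' hγ => hR.fundamentalAt n a b h γ γ' hγ

end LSim

/-- normal-form bisimilarity is sound w.r.t. contextual
equivalence: related terms have the same termination behavior in every context. -/
theorem bisim_sound (t s : Tm) (h : (t, s) ∈ Bisim) :
    ∀ C : GCtx, (∃ u, Eval (gplug C t) u) ↔ (∃ u, Eval (gplug C s) u) := by
  obtain ⟨R, hR, hts⟩ := h
  intro C
  simp only [Tm.eval_iff_lHalts]
  exact ⟨(hR.lSim.openRel ⟨_, hts, rfl⟩).gplug C |>.lHalts,
    (hR.swap.lSim.openRel ⟨(s, t), hts, rfl⟩).gplug C |>.lHalts⟩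

end NF
end
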